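/- Let Y be a normed vector space and A = [C]^× a set which is admissible at x̂ ∈ A \ int(A), determined by C. Then T_C(x̂) is nonempty and 0 ∉ T_C(x̂). -/

import Mathlib

open Topology Filter Set

noncomputable section

section Defs

variable {E : Type*} [AddCommGroup E] [Module ℝ E] [TopologicalSpace E]

/-- The canonical map from the topological dual of `E` to the weak-star dual. -/
def toWD (φ : E →L[ℝ] ℝ) : WeakDual ℝ E := φ

/-- The weak-star closed convex hull of a set of continuous linear functionals. -/
def wcch (B : Set (E →L[ℝ] ℝ)) : Set (WeakDual ℝ E) :=
  closure (convexHull ℝ (toWD '' B))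

/-- `f` is Gateaux differentiable at `x` with Gateaux-differential `f'`. -/
def HasGateauxAt (f : E → ℝ) (f' : E →L[ℝ] ℝ) (x : E) : Prop :=
  ∀ v : E, Tendsto (fun t : ℝ => (f (x + t • v) - f x - t * f' v) / t) (𝓝[>] 0) (𝓝 0)

/-- The family `C` is equi-Gateaux differentiable at `x`, with differentials given by `D`. -/
def EquiGateauxAt (C : Set (E → ℝ)) (D : (E → ℝ) → E →L[ℝ] ℝ) (x : E) : Prop :=
  (∀ φ ∈ C, HasGateauxAt φ (D φ) x) ∧
  ∀ v : E, ∀ ε : ℝ, 0 < ε → ∃ δ : ℝ, 0 < δ ∧ ∀ t : ℝ, 0 < t → t < δ →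
    ∀ φ ∈ C, |(φ (x + t • v) - φ x - t * (D φ) v) / t| ≤ ε

/-- The family `C` is equi-lower semicontinuous at `x`. -/
def EquiLscAt (C : Set (E → ℝ)) (x : E) : Prop :=
  ∀ ε : ℝ, 0 < ε → ∃ O ∈ 𝓝 x, ∀ y ∈ O, ∀ φ ∈ C, φ y - φ x > -ε

/-- `[C]^× = {x ∈ E : φ(x) ≥ 0 for all φ ∈ C}`. -/
def polarSet (C : Set (E → ℝ)) : Set E := {x | ∀ φ ∈ C, 0 ≤ φ x}

/-- The multiplier set `T_C(x̂)`. -/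
def multSet (C : Set (E → ℝ)) (D : (E → ℝ) → E →L[ℝ] ℝ) (x : E) : Set (WeakDual ℝ E) :=
  ⋂ n ∈ {n : ℕ | 1 ≤ n}, wcch (D '' {φ | φ ∈ C ∧ φ x ∈ Icc (0:ℝ) (1/(n:ℝ))})

/-- `F` is weak-admissible at `x ∈ F`, determined by `C` (with differentials `D`). -/
def WeakAdmissibleAt (F : Set E) (C : Set (E → ℝ)) (D : (E → ℝ) → E →L[ℝ] ℝ) (x : E) : Prop :=
  x ∈ F ∧ C.Nonempty ∧ F = polarSet C ∧ EquiGateauxAt C D x ∧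
    ({φ | φ ∈ C ∧ φ x ≠ 0} = ∅ ∨ EquiLscAt {φ | φ ∈ C ∧ φ x ≠ 0} x) ∧
    IsCompact (wcch (D '' C))

end Defs

section NormedDefs

variable {Y : Type*} [NormedAddCommGroup Y] [NormedSpace ℝ Y]

/-- `A` is admissible at `x ∈ A`, determined by `C` (with differentials `D`). -/
def AdmissibleAt (A : Set Y) (C : Set (Y → ℝ)) (D : (Y → ℝ) → Y →L[ℝ] ℝ) (x : Y) : Prop :=
  x ∈ A ∧ C.Nonempty ∧ A = polarSet C ∧ EquiGateauxAt C D x ∧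
    (∃ r : NNReal, ∃ ε : ℝ, 0 < ε ∧ ∀ φ ∈ C, LipschitzOnWith r φ (Metric.ball x ε)) ∧
    toWD (0 : Y →L[ℝ] ℝ) ∉ wcch (D '' C)

/-- The recession cone of a set. -/
def recCone (K : Set Y) : Set Y := {v | ∀ l : ℝ, 0 < l → ∀ x ∈ K, x + l • v ∈ K}

/-- The barrier cone of `K`: functionals bounded above on `K`. -/
def barCone (K : Set Y) : Set (Y →L[ℝ] ℝ) := {φ | BddAbove (φ '' K)}

/-- The dual positive cone `A*`. -/
def posDualCone (A : Set Y) : Set (Y →L[ℝ] ℝ) := {φ | ∀ y ∈ A, 0 ≤ φ y}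

end NormedDefs


/-
Near `xh` every constraint is `r`-Lipschitz and, by the Lipschitz bound applied to Gateaux
quotients, every differential has norm at most `r`. The sets
`Sₙ = wcch (D '' {φ ∈ C | 0 ≤ φ xh ≤ 1/n})` therefore lie in the weak-star compact ball of
radius `r` (Banach–Alaoglu). Each `Sₙ` is nonempty: since `xh` is a boundary point, some
`y` with `‖y - xh‖ < δ` violates a constraint `φ y < 0`, whence `0 ≤ φ xh ≤ r δ`. The `Sₙ`
decrease, so Cantor's intersection theorem gives `T_C(xh) = ⋂ Sₙ ≠ ∅`; and
`T_C(xh) ⊆ wcch (D '' C)`, which avoids `0` by admissibility.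
-/

def nearlyActive {X : Type*} (C : Set (X → ℝ)) (x : X) (η : ℝ) : Set (X → ℝ) :=
  {φ | φ ∈ C ∧ φ x ∈ Icc 0 η}

lemma nearlyActive_mono {X : Type*} {C : Set (X → ℝ)} {x : X} {η η' : ℝ} (h : η ≤ η') :
    nearlyActive C x η ⊆ nearlyActive C x η' :=
  fun _ ⟨hφ, h₀, h₁⟩ => ⟨hφ, h₀, h₁.trans h⟩

lemma nearlyActive_nonempty {X : Type*} [PseudoMetricSpace X] {C : Set (X → ℝ)} {x : X}
    {r : NNReal} {ε η : ℝ} (hε : 0 < ε) (hη : 0 < η)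
    (hlip : ∀ φ ∈ C, LipschitzOnWith r φ (Metric.ball x ε))
    (hx : x ∈ polarSet C \ interior (polarSet C)) : (nearlyActive C x η).Nonempty := by
  set δ := min ε (η / (r + 1))
  have hδ : 0 < δ := lt_min hε (by positivity)
  have hrδ : r * δ ≤ η := calc
    (r : ℝ) * δ ≤ (r + 1) * (η / (r + 1)) := by gcongr <;> simp [δ]
    _ = η := by field_simp
  obtain ⟨y, hyδ, hyC⟩ : ∃ y ∈ Metric.ball x δ, y ∉ polarSet C :=
    not_subset.mp fun h => hx.2 (mem_interior_iff_mem_nhds.mpr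
      (mem_of_superset (Metric.ball_mem_nhds x hδ) h))
  obtain ⟨φ, hφ, hφy⟩ : ∃ φ ∈ C, φ y < 0 := by simpa [polarSet] using hyC
  have hyε : y ∈ Metric.ball x ε := Metric.ball_subset_ball (min_le_left _ _) hyδ
  have hd := (hlip φ hφ).dist_le_mul _ hyε _ (Metric.mem_ball_self hε)
  rw [Real.dist_eq, abs_sub_comm] at hd
  have hdist : dist y x < δ := hyδ
  refine ⟨φ, hφ, hx.1 φ hφ, ?_⟩
  calc φ x ≤ |φ x - φ y| := by linarith [le_abs_self (φ x - φ y)]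
    _ ≤ r * dist y x := hd
    _ ≤ r * δ := by gcongr
    _ ≤ η := hrδ

section Weak

variable {E : Type*} [AddCommGroup E] [Module ℝ E] [TopologicalSpace E]

lemma wcch_mono {B₁ B₂ : Set (E →L[ℝ] ℝ)} (h : B₁ ⊆ B₂) : wcch B₁ ⊆ wcch B₂ :=
  closure_mono (convexHull_mono (image_mono h))

lemma wcch_nonempty {B : Set (E →L[ℝ] ℝ)} (hB : B.Nonempty) : (wcch B).Nonempty :=
  ((hB.image toWD).convexHull (𝕜 := ℝ)).closure

lemma multSet_eq_iInter (C : Set (E → ℝ)) (D : (E → ℝ) → E →L[ℝ] ℝ) (x : E) :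
    multSet C D x = ⋂ k : ℕ, wcch (D '' nearlyActive C x (1 / (k + 1 : ℕ))) := by
  ext ψ
  simp only [multSet, mem_iInter, mem_ofPred_eq]
  refine ⟨fun h k => h (k + 1) k.succ_pos, fun h n hn => ?_⟩
  obtain ⟨k, rfl⟩ := Nat.exists_eq_add_of_le' hn
  exact h k

end Weak

section Normed

variable {Y : Type*} [NormedAddCommGroup Y] [NormedSpace ℝ Y]

lemma HasGateauxAt.tendsto_slope {f : Y → ℝ} {f' : Y →L[ℝ] ℝ} {x : Y} (hf : HasGateauxAt f f' x)
    (v : Y) : Tendsto (fun t : ℝ => (f (x + t • v) - f x) / t) (𝓝[>] 0) (𝓝 (f' v)) := by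
  have h := (hf v).add_const (f' v)
  rw [zero_add] at h
  refine h.congr' ?_
  filter_upwards [self_mem_nhdsWithin] with t (ht : (0 : ℝ) < t)
  field_simp
  ring

lemma HasGateauxAt.norm_le_of_lipschitzOnWith {f : Y → ℝ} {f' : Y →L[ℝ] ℝ} {x : Y} {r : NNReal}
    {ε : ℝ} (hf : HasGateauxAt f f' x) (hε : 0 < ε)
    (hlip : LipschitzOnWith r f (Metric.ball x ε)) : ‖f'‖ ≤ r := by
  refine f'.opNorm_le_bound r.coe_nonneg fun v => ?_
  have hnear : ∀ᶠ t in 𝓝[>] (0 : ℝ), x + t • v ∈ Metric.ball x ε := by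
    have : Tendsto (fun t : ℝ => x + t • v) (𝓝 0) (𝓝 x) :=
      (by fun_prop : Continuous fun t : ℝ => x + t • v).tendsto' 0 x (by simp)
    exact (this.mono_left nhdsWithin_le_nhds).eventually (Metric.ball_mem_nhds x hε)
  have hbound : ∀ᶠ t in 𝓝[>] (0 : ℝ), |(f (x + t • v) - f x) / t| ≤ r * ‖v‖ := by
    filter_upwards [hnear, self_mem_nhdsWithin] with t hball (ht : 0 < t)
    have hd := hlip.dist_le_mul _ hball _ (Metric.mem_ball_self hε)
    rw [Real.dist_eq, dist_self_add_left, norm_smul, Real.norm_eq_abs, abs_of_pos ht] at hd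
    rw [abs_div, abs_of_pos ht, div_le_iff₀ ht]
    linarith
  exact le_of_tendsto (hf.tendsto_slope v).abs hbound

lemma isCompact_wcch_of_norm_le {B : Set (Y →L[ℝ] ℝ)} {r : ℝ} (hB : ∀ ψ ∈ B, ‖ψ‖ ≤ r) :
    IsCompact (wcch B) := by
  have hball := WeakDual.isCompact_closedBall (0 : StrongDual ℝ Y) r
  have hconv : Convex ℝ (WeakDual.toStrongDual ⁻¹' Metric.closedBall (0 : StrongDual ℝ Y) r) :=
    (convex_closedBall _ r).linear_preimage
      (WeakDual.toStrongDual : WeakDual ℝ Y ≃ₗ[ℝ] StrongDual ℝ Y).toLinearMap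
  refine hball.of_isClosed_subset isClosed_closure
    (closure_minimal (convexHull_min ?_ hconv) hball.isClosed)
  rintro _ ⟨ψ, hψ, rfl⟩
  rw [mem_preimage, Metric.mem_closedBall, dist_zero_right]
  exact hB ψ hψ

end Normed

/-- If `A = [C]^×` is admissible at `xh ∈ A \ int(A)`, determined by `C`,
then `T_C(xh)` is nonempty and `0 ∉ T_C(xh)`. -/
theorem multSet_nonempty_and_not_zero
    {Y : Type*} [NormedAddCommGroup Y] [NormedSpace ℝ Y]
    (A : Set Y) (C : Set (Y → ℝ)) (D : (Y → ℝ) → Y →L[ℝ] ℝ) (xh : Y)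
    (hadm : AdmissibleAt A C D xh)
    (hx : xh ∈ A \ interior A) :
    (multSet C D xh).Nonempty ∧ toWD (0 : Y →L[ℝ] ℝ) ∉ multSet C D xh := by
  obtain ⟨-, -, rfl, ⟨hgat, -⟩, ⟨r, ε, hε, hlip⟩, h0⟩ := hadm
  set S : ℕ → Set (WeakDual ℝ Y) := fun k => wcch (D '' nearlyActive C xh (1 / (k + 1 : ℕ)))
  have hS_nonempty (k : ℕ) : (S k).Nonempty :=
    wcch_nonempty ((nearlyActive_nonempty hε (by positivity) hlip hx).image D)
  have hS_anti (k : ℕ) : S (k + 1) ⊆ S k :=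
    wcch_mono (image_mono (nearlyActive_mono (by gcongr; simp)))
  have hS_compact : IsCompact (S 0) := isCompact_wcch_of_norm_le <| by
    rintro _ ⟨φ, hφ, rfl⟩
    exact (hgat φ hφ.1).norm_le_of_lipschitzOnWith hε (hlip φ hφ.1)
  rw [multSet_eq_iInter]
  refine ⟨IsCompact.nonempty_iInter_of_sequence_nonempty_isCompact_isClosed S hS_anti
    hS_nonempty hS_compact fun _ => isClosed_closure, fun h0S => h0 ?_⟩
  exact wcch_mono (image_mono fun φ hφ => hφ.1) (mem_iInter.mp h0S 0)
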